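/- (Segal's element) Let G be a finite group, γ a conjugacy class, and H a subgroup of G with H ∩ γ = ∅. Then there exists a virtual representation η ∈ R(G) such that the restriction η|_H = 0 in R(H) and χ_η(g) ≠ 0 for every g ∈ γ. -/

import Mathlib

/-!
The permutation character `θ` of `G ⧸ H` counts the cosets fixed by `g`, and `kH` is fixed by `g`
exactly when `k⁻¹ g k ∈ H`. So with `n = |G ⧸ H|`, `θ` takes values in `{1, …, n}` on `H`
(the coset `H` itself is fixed) and vanishes on `γ`. Hence `η = ∏_{j=1}^{n} (θ - j)` works.
-/

/-- The representation ring of `G` over `ℂ`, modeled as the ring of virtual characters. -/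
def repRing (G : Type) [Group G] : Subring (G → ℂ) :=
  Subring.closure {f : G → ℂ | ∃ V : FDRep ℂ G, f = FDRep.character V}

universe u

theorem FDRep.character_ofMulAction_apply {k G X : Type u} [Field k] [Monoid G] [MulAction G X]
    [Finite X] (g : G) :
    (FDRep.of (Representation.ofMulAction k G X)).character g =
      Nat.card (MulAction.fixedBy X g) := by
  classical
  have := Fintype.ofFinite X
  change LinearMap.trace k _ (Representation.ofMulAction k G X g) = _
  rw [LinearMap.trace_eq_matrix_trace k (MonoidAlgebra.basis X k), Matrix.trace,
    Nat.card_eq_fintype_card, Fintype.card_subtype, Finset.card_filter]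
  push_cast
  refine Finset.sum_congr rfl fun x _ => ?_
  simp [LinearMap.toMatrix_apply, MonoidAlgebra.basis, MonoidAlgebra.coeffLinearEquiv,
    Finsupp.single_apply]

theorem QuotientGroup.mk_mem_fixedBy_iff {G : Type*} [Group G] {H : Subgroup G} {g k : G} :
    (k : G ⧸ H) ∈ MulAction.fixedBy (G ⧸ H) g ↔ k⁻¹ * g * k ∈ H := by
  rw [MulAction.mem_fixedBy, MulAction.Quotient.smul_mk, QuotientGroup.eq, ← H.inv_mem_iff]
  simp [mul_assoc]

theorem Finset.prod_Icc_natCast_sub_natCast_eq_zero {R : Type*} [CommRing R] {m n : ℕ}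
    (h1m : 1 ≤ m) (hmn : m ≤ n) : ∏ j ∈ Finset.Icc 1 n, ((m : R) - j) = 0 :=
  Finset.prod_eq_zero (Finset.mem_Icc.2 ⟨h1m, hmn⟩) (sub_self _)

theorem Finset.prod_Icc_zero_sub_natCast_ne_zero {R : Type*} [CommRing R] [IsDomain R] [CharZero R]
    (n : ℕ) : ∏ j ∈ Finset.Icc 1 n, ((0 : R) - j) ≠ 0 :=
  Finset.prod_ne_zero_iff.2 fun j hj => by
    rw [zero_sub, neg_ne_zero, Nat.cast_ne_zero]
    exact Nat.one_le_iff_ne_zero.1 (Finset.mem_Icc.1 hj).1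

theorem Subring.coe_prod_sub_natCast_apply {α R : Type*} [CommRing R] {S : Subring (α → R)}
    (f : S) (s : Finset ℕ) (a : α) :
    ((∏ j ∈ s, (f - j) : S) : α → R) a = ∏ j ∈ s, ((f : α → R) a - j) := by
  simp [Finset.prod_apply]

/-- Segal's element: a virtual character of `G` whose restriction to `H` vanishes
(i.e. is zero in `R(H)`), but which is nonzero on every element of `γ`. -/
theorem stmt_12 {G : Type} [Group G] [Fintype G] (g₀ : G) (γ : Set G)
    (hγ : γ = {x : G | ∃ k : G, k * g₀ * k⁻¹ = x})
    (H : Subgroup G) (hH : (H : Set G) ∩ γ = ∅) :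
    ∃ η : repRing G, (∀ h ∈ H, (η : G → ℂ) h = 0) ∧ ∀ g ∈ γ, (η : G → ℂ) g ≠ 0 := by
  let θ : repRing G :=
    ⟨_, Subring.subset_closure ⟨FDRep.of (Representation.ofMulAction ℂ G (G ⧸ H)), rfl⟩⟩
  have hθ (g : G) : (θ : G → ℂ) g = Nat.card (MulAction.fixedBy (G ⧸ H) g) :=
    FDRep.character_ofMulAction_apply g
  have hnoConj (g : G) (hg : g ∈ γ) (k : G) : k⁻¹ * g * k ∉ H := by
    subst hγ
    obtain ⟨j, rfl⟩ := hg
    refine fun hmem => (Set.eq_empty_iff_forall_notMem.1 hH) _ ⟨hmem, k⁻¹ * j, ?_⟩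
    group
  refine ⟨∏ j ∈ Finset.Icc 1 (Nat.card (G ⧸ H)), (θ - j), fun h hh => ?_, fun g hg => ?_⟩
  · rw [Subring.coe_prod_sub_natCast_apply, hθ]
    refine Finset.prod_Icc_natCast_sub_natCast_eq_zero
      (Nat.card_pos_iff.2 ⟨⟨((1 : G) : G ⧸ H), ?_⟩, inferInstance⟩) (Finite.card_subtype_le _)
    rwa [QuotientGroup.mk_mem_fixedBy_iff, inv_one, one_mul, mul_one]
  · have hfix : MulAction.fixedBy (G ⧸ H) g = ∅ :=
      Set.eq_empty_iff_forall_notMem.2 fun x =>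
        QuotientGroup.induction_on x fun k =>
          QuotientGroup.mk_mem_fixedBy_iff.not.2 (hnoConj g hg k)
    rw [Subring.coe_prod_sub_natCast_apply, hθ, hfix, Nat.card_coe_set_eq, Set.ncard_empty,
      Nat.cast_zero]
    exact Finset.prod_Icc_zero_sub_natCast_ne_zero _
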